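/- Let M_1,…,M_s be perfect matchings of K_{2n} such that each edge of K_{2n} appears in at most k of them. If k ≤ (1/(e·2x(2n-1)·C(n-1,x-1))) · (Σ_{j=2x-n}^{x} C(2x,2j)·(2j)!/(j!·2^j) − e), then there exists a perfect matching of K_{2n} that agrees with each M_i in at most x-1 edges. -/

import Mathlib

/-!
Each `M i` has `n` edges and every edge lies in at most `k` of them, so double counting the
edges of `K_{2n}` gives `s ≤ k (2n-1)`. Of the `(2n-1)‼` perfect matchings of `K_{2n}`, those
sharing `x` edges with a fixed `M i` contain one of its `C(n,x)` sets of `x` edges, so there are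
at most `C(n,x) (2(n-x)-1)‼` of them; a union bound finds the required matching as soon as
`s C(n,x) < P := (2n-1)(2n-3)⋯(2(n-x)+1) = (2n-1)‼ / (2(n-x)-1)‼`.

Comparing the coefficients of `X^(2x)` in `((1+X)^2)^n = (X^2 + (1+2X))^n` gives
`P = ∑ⱼ m(x,j) 2^(x-j) (n-x)(n-x-1)⋯(n-2x+j+1)`, where `m(x,j) = C(2x,2j) (2j-1)‼` is the
`j`-th summand of the hypothesis (the number of `j`-edge matchings of `K_{2x}`). Every weight with
`j < x` is at least `2(n-x)`, and `m(x,x-1) = x m(x,x)`; this yields `n ∑ⱼ m(x,j) ≤ 2x² P`, which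
together with `x C(n,x) = n C(n-1,x-1)` turns the hypothesis on `k` into `k (2n-1) C(n,x) < P`.
-/
open Finset

/-- A matching: a set of pairwise disjoint edges (2-element vertex sets). -/
def IsMatching {V : Type} [DecidableEq V] (M : Finset (Finset V)) : Prop :=
  (∀ e ∈ M, e.card = 2) ∧ (M : Set (Finset V)).Pairwise Disjoint

/-- A perfect matching of the complete graph on `V`: a matching covering every vertex. -/
def IsPerfectMatching {V : Type} [DecidableEq V] (M : Finset (Finset V)) : Prop :=
  IsMatching M ∧ ∀ v : V, ∃ e ∈ M, v ∈ e

open scoped Nat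

def oddProd (a x : ℕ) : ℕ := ∏ i ∈ range x, (2 * (a + i) + 1)

theorem doubleFactorial_eq_oddProd_mul (a x : ℕ) :
    (2 * (a + x) - 1)‼ = oddProd a x * (2 * a - 1)‼ := by
  induction x with
  | zero => simp [oddProd]
  | succ x ih =>
    rw [oddProd, prod_range_succ, ← oddProd, mul_right_comm, ← ih,
      show 2 * (a + (x + 1)) - 1 = 2 * (a + x) + 1 by omega, Nat.doubleFactorial_add_one]
    ring_nf

section Matchings

variable {V : Type} [DecidableEq V]

theorem IsMatching.mono {M N : Finset (Finset V)} (hM : IsMatching M) (h : N ⊆ M) :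
    IsMatching N :=
  ⟨fun e he => hM.1 e (h he), hM.2.mono (coe_subset.2 h)⟩

theorem IsMatching.card_biUnion {M : Finset (Finset V)} (hM : IsMatching M) :
    (M.biUnion id).card = 2 * M.card := by
  rw [Finset.card_biUnion (t := id) hM.2]
  exact (sum_const_nat hM.1).trans (mul_comm _ _)

theorem IsMatching.biUnion_sdiff {M T : Finset (Finset V)} (hM : IsMatching M) (hT : T ⊆ M) :
    (M \ T).biUnion id = M.biUnion id \ T.biUnion id := by
  ext v
  simp only [mem_biUnion, mem_sdiff, id]
  constructor
  · rintro ⟨e, ⟨heM, heT⟩, hve⟩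
    refine ⟨⟨e, heM, hve⟩, ?_⟩
    rintro ⟨f, hfT, hvf⟩
    exact disjoint_left.1 (hM.2 heM (hT hfT) fun hef => heT (hef ▸ hfT)) hve hvf
  · rintro ⟨⟨e, heM, hve⟩, hv⟩
    exact ⟨e, ⟨heM, fun heT => hv ⟨e, heT, hve⟩⟩, hve⟩

theorem IsMatching.insert {M : Finset (Finset V)} {e : Finset V} (hM : IsMatching M)
    (he : e.card = 2) (hdisj : Disjoint e (M.biUnion id)) : IsMatching (insert e M) := by
  refine ⟨fun f hf => (mem_insert.1 hf).elim (· ▸ he) (hM.1 f), ?_⟩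
  rw [coe_insert]
  refine hM.2.insert fun f hf _ => ?_
  have hef : Disjoint e f := hdisj.mono_right (subset_biUnion_of_mem id hf)
  exact ⟨hef, hef.symm⟩

noncomputable def perfectMatchingsOn (s : Finset V) : Finset (Finset (Finset V)) :=
  open Classical in s.powerset.powerset.filter fun M => IsMatching M ∧ M.biUnion id = s

theorem mem_perfectMatchingsOn {s : Finset V} {M : Finset (Finset V)} :
    M ∈ perfectMatchingsOn s ↔ IsMatching M ∧ M.biUnion id = s := by
  simp only [perfectMatchingsOn, mem_filter, and_iff_right_iff_imp, mem_powerset]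
  rintro ⟨-, rfl⟩ e he
  exact mem_powerset.2 (subset_biUnion_of_mem id he)

theorem two_mul_card_of_mem_perfectMatchingsOn {s : Finset V} {M : Finset (Finset V)}
    (hM : M ∈ perfectMatchingsOn s) : 2 * M.card = s.card := by
  obtain ⟨hM', rfl⟩ := mem_perfectMatchingsOn.1 hM
  exact hM'.card_biUnion.symm

theorem isPerfectMatching_iff_mem_perfectMatchingsOn [Fintype V] {M : Finset (Finset V)} :
    IsPerfectMatching M ↔ M ∈ perfectMatchingsOn univ := by
  simp only [IsPerfectMatching, mem_perfectMatchingsOn, eq_univ_iff_forall, mem_biUnion, id]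

theorem notMem_of_mem_perfectMatchingsOn {M : Finset (Finset V)} {s e : Finset V} {v : V}
    (hM : M ∈ perfectMatchingsOn s) (hv : v ∉ s) (hve : v ∈ e) : e ∉ M := fun he =>
  hv ((mem_perfectMatchingsOn.1 hM).2 ▸ mem_biUnion.2 ⟨e, he, hve⟩)

theorem perfectMatchingsOn_eq_biUnion {s : Finset V} {v : V} (hv : v ∈ s) :
    perfectMatchingsOn s = (s.erase v).biUnion fun w =>
      (perfectMatchingsOn ((s.erase v).erase w)).image (insert {v, w}) := by
  ext M
  simp only [mem_biUnion, mem_image, mem_perfectMatchingsOn]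
  constructor
  · rintro ⟨hM, hMs⟩
    obtain ⟨e, he, hve : v ∈ e⟩ := mem_biUnion.1 (hMs.symm ▸ hv)
    obtain ⟨w, hw⟩ := card_eq_one.1 (by rw [card_erase_of_mem hve, hM.1 e he])
    have hwe : w ∈ e.erase v := hw ▸ mem_singleton_self w
    obtain rfl : e = {v, w} := by rw [← insert_erase hve, hw]
    refine ⟨w, mem_erase.2 ⟨ne_of_mem_erase hwe, hMs ▸ subset_biUnion_of_mem id he
      (mem_of_mem_erase hwe)⟩, M.erase {v, w}, ⟨hM.mono (erase_subset _ _), ?_⟩, insert_erase he⟩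
    rw [erase_eq, hM.biUnion_sdiff (singleton_subset_iff.2 he), hMs, singleton_biUnion]
    ext u
    simp only [mem_sdiff, mem_insert, mem_singleton, mem_erase, id]
    tauto
  · rintro ⟨w, hw, M', ⟨hM', hM's⟩, rfl⟩
    have hvw : v ≠ w := (ne_of_mem_erase hw).symm
    have hws : w ∈ s := mem_of_mem_erase hw
    refine ⟨hM'.insert (card_pair hvw) ?_, ?_⟩
    · rw [hM's, disjoint_insert_left, disjoint_singleton_left]
      simp
    · rw [biUnion_insert, hM's]
      ext u
      simp only [mem_union, mem_insert, mem_singleton, mem_erase, id]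
      constructor
      · rintro ((rfl | rfl) | ⟨-, -, hu⟩) <;> assumption
      · intro hu
        tauto

theorem card_perfectMatchingsOn_eq_sum {s : Finset V} {v : V} (hv : v ∈ s) :
    (perfectMatchingsOn s).card =
      ∑ w ∈ s.erase v, (perfectMatchingsOn ((s.erase v).erase w)).card := by
  have hvs (w : V) : v ∉ (s.erase v).erase w := fun h => (mem_erase.1 (mem_of_mem_erase h)).1 rfl
  rw [perfectMatchingsOn_eq_biUnion hv, card_biUnion]
  · refine sum_congr rfl fun w _ => card_image_of_injOn fun M₁ h₁ M₂ h₂ h => ?_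
    rw [← erase_insert (notMem_of_mem_perfectMatchingsOn h₁ (hvs w) (mem_insert_self v {w})), h,
      erase_insert (notMem_of_mem_perfectMatchingsOn h₂ (hvs w) (mem_insert_self v {w}))]
  · intro w hw w' hw' hne
    simp only [Function.onFun, disjoint_left, mem_image]
    rintro _ ⟨M₁, h₁, rfl⟩ ⟨M₂, -, h⟩
    rcases mem_insert.1 (h ▸ mem_insert_self {v, w'} M₂) with h' | h'
    · have hw'w : w' ∈ ({v, w} : Finset V) := h' ▸ mem_insert_of_mem (mem_singleton_self w')
      rcases mem_insert.1 hw'w with rfl | hw'w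
      · exact (ne_of_mem_erase hw') rfl
      · exact hne (mem_singleton.1 hw'w).symm
    · exact notMem_of_mem_perfectMatchingsOn h₁ (hvs w) (mem_insert_self v {w'}) h'

theorem card_perfectMatchingsOn {s : Finset V} {m : ℕ} (hs : s.card = 2 * m) :
    (perfectMatchingsOn s).card = (2 * m - 1)‼ := by
  induction m generalizing s with
  | zero =>
    rw [card_eq_zero.1 hs]
    refine card_eq_one.2 ⟨∅, eq_singleton_iff_unique_mem.2 ⟨?_, fun M hM => ?_⟩⟩
    · exact mem_perfectMatchingsOn.2 ⟨⟨by simp, by simp⟩, by simp⟩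
    · have h := (mem_perfectMatchingsOn.1 hM).1.card_biUnion
      rw [(mem_perfectMatchingsOn.1 hM).2, card_empty] at h
      exact card_eq_zero.1 (by omega)
  | succ m ih =>
    obtain ⟨v, hv⟩ := card_pos.1 (by omega : 0 < s.card)
    rw [card_perfectMatchingsOn_eq_sum hv, sum_const_nat fun w hw => ih (by
      rw [card_erase_of_mem hw, card_erase_of_mem hv, hs]; omega), card_erase_of_mem hv, hs,
      show 2 * (m + 1) - 1 = 2 * m + 1 by omega, Nat.doubleFactorial_add_one]

theorem card_filter_subset_perfectMatchingsOn_le {s : Finset V} {T : Finset (Finset V)}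
    (hT : IsMatching T) (hTs : T.biUnion id ⊆ s) {m : ℕ} (hs : s.card = 2 * (T.card + m)) :
    ((perfectMatchingsOn s).filter (T ⊆ ·)).card ≤ (2 * m - 1)‼ := by
  rw [← card_perfectMatchingsOn (s := s \ T.biUnion id) (by
    rw [card_sdiff_of_subset hTs, hT.card_biUnion, hs]; omega)]
  refine card_le_card_of_injOn (· \ T) (fun M hM => ?_) fun M₁ h₁ M₂ h₂ h => ?_
  · obtain ⟨hM, hTM⟩ := mem_filter.1 hM
    obtain ⟨hM, hMs⟩ := mem_perfectMatchingsOn.1 hM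
    exact mem_perfectMatchingsOn.2 ⟨hM.mono sdiff_subset, hMs ▸ hM.biUnion_sdiff hTM⟩
  · rw [← sdiff_union_of_subset (mem_filter.1 h₁).2, ← sdiff_union_of_subset (mem_filter.1 h₂).2]
    exact congrArg (· ∪ T) h

theorem card_filter_le_card_inter_le {s : Finset V} {N : Finset (Finset V)}
    (hN : N ∈ perfectMatchingsOn s) {n : ℕ} (hs : s.card = 2 * n) (x : ℕ) :
    ((perfectMatchingsOn s).filter fun M => x ≤ (M ∩ N).card).card ≤
      n.choose x * (2 * (n - x) - 1)‼ := by
  have hNn : N.card = n := by have := two_mul_card_of_mem_perfectMatchingsOn hN; omega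
  obtain ⟨hN, hNs⟩ := mem_perfectMatchingsOn.1 hN
  calc _ ≤ ((N.powersetCard x).biUnion fun T => (perfectMatchingsOn s).filter (T ⊆ ·)).card := by
        refine card_le_card fun M hM => ?_
        obtain ⟨hMs, hx⟩ := mem_filter.1 hM
        obtain ⟨T, hT, rfl⟩ := exists_subset_card_eq hx
        exact mem_biUnion.2 ⟨T, mem_powersetCard.2 ⟨hT.trans inter_subset_right, rfl⟩,
          mem_filter.2 ⟨hMs, hT.trans inter_subset_left⟩⟩
    _ ≤ (N.powersetCard x).card * (2 * (n - x) - 1)‼ := by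
        refine card_biUnion_le_card_mul _ _ _ fun T hT => ?_
        obtain ⟨hTN, rfl⟩ := mem_powersetCard.1 hT
        have hxn := card_le_card hTN
        exact card_filter_subset_perfectMatchingsOn_le (hN.mono hTN)
          (hNs ▸ biUnion_subset_biUnion_of_subset_left id hTN) (by omega)
    _ = n.choose x * (2 * (n - x) - 1)‼ := by rw [card_powersetCard, hNn]

theorem exists_mem_perfectMatchingsOn_forall_card_inter_lt {ι : Type*} [Fintype ι]
    {s : Finset V} {n x : ℕ} (hs : s.card = 2 * n) (hxn : x ≤ n)
    (N : ι → Finset (Finset V)) (hN : ∀ i, N i ∈ perfectMatchingsOn s)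
    (h : Fintype.card ι * n.choose x < oddProd (n - x) x) :
    ∃ M ∈ perfectMatchingsOn s, ∀ i, (M ∩ N i).card < x := by
  by_contra! hbad
  have hcover : perfectMatchingsOn s ⊆
      univ.biUnion fun i => (perfectMatchingsOn s).filter fun M => x ≤ (M ∩ N i).card :=
    fun M hM => by
      obtain ⟨i, hi⟩ := hbad M hM
      exact mem_biUnion.2 ⟨i, mem_univ i, mem_filter.2 ⟨hM, hi⟩⟩
  have hle := (card_le_card hcover).trans
    (card_biUnion_le_card_mul _ _ _ fun i _ => card_filter_le_card_inter_le (hN i) hs x)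
  have hP := doubleFactorial_eq_oddProd_mul (n - x) x
  rw [Nat.sub_add_cancel hxn] at hP
  rw [card_perfectMatchingsOn hs, card_univ, hP, ← mul_assoc] at hle
  exact (Nat.mul_lt_mul_of_pos_right h (Nat.doubleFactorial_pos _)).not_ge hle

theorem card_le_mul_of_forall_card_filter_mem_le [Fintype V] {ι : Type*} [Fintype ι] {n k : ℕ}
    (hV : Fintype.card V = 2 * n) (hn : 0 < n) (N : ι → Finset (Finset V))
    (hN : ∀ i, N i ∈ perfectMatchingsOn univ)
    (hk : ∀ e : Finset V, e.card = 2 → (univ.filter fun i => e ∈ N i).card ≤ k) :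
    Fintype.card ι ≤ k * (2 * n - 1) := by
  have hedges i : n ≤ ((univ.powersetCard 2).bipartiteAbove (fun i e => e ∈ N i) i).card := by
    have hNi := two_mul_card_of_mem_perfectMatchingsOn (hN i)
    rw [card_univ, hV] at hNi
    calc n = (N i).card := by omega
      _ ≤ _ := card_le_card fun e he => (mem_bipartiteAbove _).2
          ⟨mem_powersetCard.2 ⟨subset_univ e, (mem_perfectMatchingsOn.1 (hN i)).1.1 e he⟩, he⟩
  have hcount := card_nsmul_le_card_nsmul (s := univ) (t := univ.powersetCard 2) _
    (fun i _ => hedges i) fun e he => hk e (mem_powersetCard.1 he).2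
  rw [card_univ, card_powersetCard, card_univ, hV, smul_eq_mul, smul_eq_mul,
    Nat.choose_two_right, mul_assoc, Nat.mul_div_cancel_left _ two_pos] at hcount
  exact Nat.le_of_mul_le_mul_right (by linarith) hn

end Matchings

theorem factorial_two_mul_eq_mul_doubleFactorial (j : ℕ) :
    (2 * j)! = 2 ^ j * j ! * (2 * j - 1)‼ := by
  cases j with
  | zero => rfl
  | succ j =>
    rw [show 2 * (j + 1) = 2 * j + 1 + 1 by ring, Nat.factorial_eq_mul_doubleFactorial,
      show 2 * j + 1 + 1 = 2 * (j + 1) by ring, Nat.doubleFactorial_two_mul]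
    rfl

def matchingCount (x j : ℕ) : ℕ := (2 * x).choose (2 * j) * (2 * j - 1)‼

/-- `crossWeight a m * (2a-1)‼` counts the ways to match `2m` given vertices into `2a` further
vertices and to pair off the remaining `2(a-m)` of those perfectly. -/
def crossWeight (a m : ℕ) : ℕ := 2 ^ m * a.descFactorial m

theorem cast_doubleFactorial_two_mul_sub_one (j : ℕ) :
    ((2 * j - 1)‼ : ℝ) = (2 * j)! / (2 ^ j * j !) := by
  rw [factorial_two_mul_eq_mul_doubleFactorial]; push_cast; field_simp

theorem cast_oddProd (a x : ℕ) :
    (oddProd a x : ℝ) = (2 * (a + x)).choose (2 * x) * ((2 * x)! * a ! / (2 ^ x * (a + x)!)) := by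
  have h := doubleFactorial_eq_oddProd_mul a x
  rw [← Nat.cast_inj (R := ℝ), Nat.cast_mul, cast_doubleFactorial_two_mul_sub_one,
    cast_doubleFactorial_two_mul_sub_one, pow_add] at h
  rw [Nat.cast_choose ℝ (by omega), show 2 * (a + x) - 2 * x = 2 * a by omega]
  field_simp at h ⊢
  linear_combination -h

theorem cast_matchingCount_mul_crossWeight {a x j : ℕ} (h₁ : x - a ≤ j) (h₂ : j ≤ x) :
    ((matchingCount x j * crossWeight a (x - j) : ℕ) : ℝ) =
      (2 ^ (2 * (x - j)) * (a + x).choose j * (a + x - j).choose (2 * (x - j)) : ℕ) *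
        ((2 * x)! * a ! / (2 ^ x * (a + x)!)) := by
  obtain ⟨m, rfl⟩ : ∃ m, x = j + m := ⟨x - j, by omega⟩
  obtain ⟨b, rfl⟩ : ∃ b, a = m + b := ⟨a - m, by omega⟩
  have e₁ : j + m - j = m := by omega
  have e₂ : m + b + (j + m) - j = 2 * m + b := by omega
  rw [e₁, e₂, matchingCount, crossWeight]
  push_cast
  rw [cast_doubleFactorial_two_mul_sub_one, Nat.cast_choose ℝ (by omega : 2 * j ≤ 2 * (j + m)),
    Nat.cast_choose ℝ (by omega : j ≤ m + b + (j + m)),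
    Nat.cast_choose ℝ (by omega : 2 * m ≤ 2 * m + b)]
  have hd : (b ! : ℝ) * (m + b).descFactorial m = (m + b)! := by
    exact_mod_cast (show m + b - m = b by omega) ▸ Nat.factorial_mul_descFactorial (by omega)
  rw [show 2 * (j + m) - 2 * j = 2 * m by omega, e₂, show 2 * m + b - 2 * m = b by omega, ← hd]
  field_simp
  ring

open Polynomial in
theorem coeff_one_add_C_mul_X_pow {R : Type*} [CommSemiring R] (r : R) (m k : ℕ) :
    ((1 + C r * X) ^ m).coeff k = r ^ k * m.choose k := by
  rw [add_comm, add_pow, finsetSum_coeff]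
  simp only [one_pow, mul_one, mul_pow, ← C_pow, ← C_eq_natCast, coeff_mul_C, coeff_C_mul_X_pow,
    ite_mul, zero_mul, sum_ite_eq, mem_range]
  split_ifs with h
  · rfl
  · rw [Nat.choose_eq_zero_of_lt (by omega), Nat.cast_zero, mul_zero]

open Polynomial in
theorem choose_two_mul_eq_sum (a x : ℕ) :
    ∑ j ∈ Icc (x - a) x, 2 ^ (2 * (x - j)) * (a + x).choose j * (a + x - j).choose (2 * (x - j))
      = (2 * (a + x)).choose (2 * x) := by
  have hsq : ((X + 1) ^ 2 : ℕ[X]) = X ^ 2 + (1 + C 2 * X) := by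
    simp only [map_ofNat]; ring
  rw [← Nat.cast_id ((2 * (a + x)).choose (2 * x)), ← coeff_X_add_one_pow ℕ, pow_mul, hsq,
    add_pow, finsetSum_coeff]
  refine sum_subset_zero_on_sdiff (fun j hj => ?_) (fun j hj => ?_) (fun j hj => ?_)
  · simp only [mem_Icc, mem_range] at hj ⊢; omega
  · simp only [mem_sdiff, mem_Icc, mem_range] at hj
    rw [← pow_mul, coeff_mul_natCast, coeff_X_pow_mul', coeff_one_add_C_mul_X_pow, Nat.cast_id]
    split_ifs with h
    · rw [Nat.choose_eq_zero_of_lt (by omega), mul_zero, zero_mul]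
    · rw [zero_mul]
  · simp only [mem_Icc] at hj
    rw [← pow_mul, coeff_mul_natCast, coeff_X_pow_mul', if_pos (by omega),
      coeff_one_add_C_mul_X_pow, Nat.cast_id, Nat.cast_id, ← Nat.mul_sub]
    ring

theorem sum_matchingCount_mul_crossWeight (a x : ℕ) :
    ∑ j ∈ Icc (x - a) x, matchingCount x j * crossWeight a (x - j) = oddProd a x := by
  rw [← Nat.cast_inj (R := ℝ), Nat.cast_sum, sum_congr rfl fun j hj =>
    cast_matchingCount_mul_crossWeight (mem_Icc.1 hj).1 (mem_Icc.1 hj).2, ← sum_mul,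
    ← Nat.cast_sum, choose_two_mul_eq_sum, cast_oddProd]

theorem matchingCount_pred (y : ℕ) :
    matchingCount (y + 1) y = (y + 1) * matchingCount (y + 1) (y + 1) := by
  have hchoose : (2 * (y + 1)).choose (2 * y) = (y + 1) * (2 * y + 1) := by
    rw [show 2 * (y + 1) = 2 * y + 2 by ring, Nat.choose_symm_add, Nat.choose_two_right,
      show (2 * y + 2) * (2 * y + 2 - 1) = (y + 1) * (2 * y + 1) * 2 by
        rw [show 2 * y + 2 - 1 = 2 * y + 1 by omega]; ring]
    exact Nat.mul_div_cancel _ two_pos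
  rw [matchingCount, matchingCount, hchoose, Nat.choose_self,
    show 2 * (y + 1) - 1 = 2 * y + 1 by omega, Nat.doubleFactorial_add_one]
  ring

theorem two_mul_le_crossWeight {a m : ℕ} (h₁ : 1 ≤ m) (h₂ : m ≤ a) :
    2 * a ≤ crossWeight a m := by
  obtain ⟨m, rfl⟩ := Nat.exists_eq_add_of_le' h₁
  obtain ⟨a, rfl⟩ := Nat.exists_eq_add_of_le' (h₁.trans h₂)
  rw [crossWeight, Nat.succ_descFactorial_succ]
  have h₃ : 2 ≤ 2 ^ (m + 1) := le_self_pow (by norm_num) (by omega)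
  have h₄ : 1 ≤ a.descFactorial m := Nat.descFactorial_pos.2 (by omega)
  calc 2 * (a + 1) ≤ 2 ^ (m + 1) * ((a + 1) * 1) := by
        rw [mul_one]; exact Nat.mul_le_mul_right _ h₃
    _ ≤ _ := Nat.mul_le_mul_left _ (Nat.mul_le_mul_left _ h₄)

theorem add_mul_sum_Icc_pred_matchingCount_le {a x : ℕ} (hx : 1 ≤ x) :
    (a + x) * ∑ j ∈ Icc (x - a) (x - 1), matchingCount x j ≤ x ^ 2 * oddProd a x := by
  rw [← sum_matchingCount_mul_crossWeight, mul_sum, mul_sum]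
  calc _ ≤ ∑ j ∈ Icc (x - a) (x - 1), x ^ 2 * (matchingCount x j * crossWeight a (x - j)) := by
        refine sum_le_sum fun j hj => ?_
        obtain ⟨hj₁, hj₂⟩ := mem_Icc.1 hj
        have hW := two_mul_le_crossWeight (a := a) (m := x - j) (by omega) (by omega)
        have hax : a + x ≤ x ^ 2 * crossWeight a (x - j) :=
          calc a + x ≤ x ^ 2 * (2 * a) := by
                have ha : 1 ≤ a := by omega
                have e₁ : 1 * x ^ 2 ≤ a * x ^ 2 := Nat.mul_le_mul_right _ ha
                have e₂ : a * 1 ≤ a * x ^ 2 := Nat.mul_le_mul_left _ (Nat.one_le_pow _ _ hx)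
                linarith [Nat.le_self_pow two_ne_zero x]
            _ ≤ _ := Nat.mul_le_mul_left _ hW
        calc (a + x) * matchingCount x j ≤ x ^ 2 * crossWeight a (x - j) * matchingCount x j :=
              Nat.mul_le_mul_right _ hax
          _ = _ := by ring
    _ ≤ _ := sum_le_sum_of_subset (Icc_subset_Icc le_rfl (Nat.sub_le x 1))

theorem add_mul_matchingCount_self_le {a x : ℕ} (hx : 1 ≤ x) :
    (a + x) * matchingCount x x ≤ x ^ 2 * oddProd a x := by
  obtain ⟨y, rfl⟩ := Nat.exists_eq_add_of_le' hx
  have hP : (1 + 2 * a * (y + 1)) * matchingCount (y + 1) (y + 1) ≤ oddProd a (y + 1) := by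
    rw [← sum_matchingCount_mul_crossWeight]
    rcases Nat.eq_zero_or_pos a with rfl | ha
    · refine le_of_eq_of_le ?_ (single_le_sum (fun _ _ => Nat.zero_le _) (right_mem_Icc.2 le_rfl))
      simp [crossWeight]
    · refine le_of_eq_of_le ?_ (sum_le_sum_of_subset (s := {y, y + 1}) ?_)
      · rw [sum_pair (by omega), matchingCount_pred, show y + 1 - y = 1 by omega, Nat.sub_self]
        simp only [crossWeight, Nat.descFactorial_one, Nat.descFactorial_zero]
        ring
      · intro j hj
        simp only [mem_insert, mem_singleton] at hj
        rw [mem_Icc]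
        omega
  calc (a + (y + 1)) * matchingCount (y + 1) (y + 1)
      ≤ (y + 1) ^ 2 * ((1 + 2 * a * (y + 1)) * matchingCount (y + 1) (y + 1)) := by
        rw [← mul_assoc]
        have e₁ : y + 1 ≤ (y + 1) ^ 2 := Nat.le_self_pow two_ne_zero _
        have e₂ : a ≤ a * (2 * (y + 1) ^ 3) := Nat.le_mul_of_pos_right _ (by positivity)
        exact Nat.mul_le_mul_right _ (by linarith)
    _ ≤ _ := Nat.mul_le_mul_left _ hP

theorem add_mul_sum_matchingCount_le {a x : ℕ} (hx : 1 ≤ x) :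
    (a + x) * ∑ j ∈ Icc (x - a) x, matchingCount x j ≤ 2 * x ^ 2 * oddProd a x := by
  obtain ⟨y, rfl⟩ := Nat.exists_eq_add_of_le' hx
  have h₁ := add_mul_sum_Icc_pred_matchingCount_le (a := a) hx
  have h₂ := add_mul_matchingCount_self_le (a := a) hx
  rw [Nat.add_sub_cancel] at h₁
  rw [sum_Icc_succ_top (by omega), mul_add]
  linarith

theorem cast_choose_mul_factorial_div (x j : ℕ) :
    ((2 * x).choose (2 * j) : ℝ) * (2 * j)! / (j ! * 2 ^ j) = matchingCount x j := by
  rw [matchingCount, Nat.cast_mul, cast_doubleFactorial_two_mul_sub_one]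
  field_simp

theorem mul_choose_lt_oddProd {n x k : ℕ} (hx : 1 ≤ x) (hxn : x ≤ n)
    (hk : (k : ℝ) ≤ (1 / (Real.exp 1 * (2 * x) * (2 * (n : ℝ) - 1) * ((n - 1).choose (x - 1)))) *
      ((∑ j ∈ Icc (2 * x - n) x, ((2 * x).choose (2 * j) : ℝ) * (2 * j)! / (j ! * 2 ^ j)) -
        Real.exp 1)) :
    k * (2 * n - 1) * n.choose x < oddProd (n - x) x := by
  simp only [cast_choose_mul_factorial_div, ← Nat.cast_sum] at hk
  set S := ∑ j ∈ Icc (2 * x - n) x, matchingCount x j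
  set P := oddProd (n - x) x
  have hS : (n * S : ℝ) ≤ 2 * x ^ 2 * P := by
    have := add_mul_sum_matchingCount_le (a := n - x) hx
    rw [Nat.sub_add_cancel hxn, show x - (n - x) = 2 * x - n by omega] at this
    exact_mod_cast this
  have hchoose : (n * (n - 1).choose (x - 1) : ℝ) = n.choose x * x := by
    have := Nat.add_one_mul_choose_eq (n - 1) (x - 1)
    rw [Nat.sub_add_cancel (by omega), Nat.sub_add_cancel hx] at this
    exact_mod_cast this
  have he : 1 ≤ Real.exp 1 := by linarith [Real.add_one_le_exp 1]
  have hn : (1 : ℝ) ≤ n := by exact_mod_cast hx.trans hxn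
  have hx' : (1 : ℝ) ≤ x := by exact_mod_cast hx
  set D := Real.exp 1 * (2 * x) * (2 * (n : ℝ) - 1) * ((n - 1).choose (x - 1))
  have hD : 0 < D := by
    have : (0 : ℝ) < (n - 1).choose (x - 1) := by exact_mod_cast Nat.choose_pos (by omega)
    exact mul_pos (mul_pos (mul_pos (Real.exp_pos 1) (by linarith)) (by linarith)) this
  have hkD : D * k ≤ S - Real.exp 1 := by rwa [one_div, le_inv_mul_iff₀ hD] at hk
  have hlt : (k : ℝ) * (2 * n - 1) * n.choose x < P := by
    refine lt_of_mul_lt_mul_right (a := 2 * Real.exp 1 * x ^ 2) ?_ (by positivity)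
    calc (k : ℝ) * (2 * n - 1) * n.choose x * (2 * Real.exp 1 * x ^ 2) = D * k * n := by
          simp only [D]; linear_combination (-2 * Real.exp 1 * k * x * (2 * n - 1)) * hchoose
      _ ≤ (S - Real.exp 1) * n := by gcongr
      _ < n * S := by nlinarith
      _ ≤ 2 * x ^ 2 * P := hS
      _ ≤ P * (2 * Real.exp 1 * x ^ 2) := by
          nlinarith [mul_nonneg (sub_nonneg.2 he) (by positivity : (0 : ℝ) ≤ 2 * x ^ 2 * P)]
  rw [← Nat.cast_lt (α := ℝ), Nat.cast_mul, Nat.cast_mul, Nat.cast_sub (by omega)]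
  push_cast
  exact hlt

theorem mainTheorem (n x s k : ℕ) (hx1 : 1 ≤ x) (hxn : x ≤ n)
    (M : Fin s → Finset (Finset (Fin (2*n)))) (hM : ∀ i, IsPerfectMatching (M i))
    (hk : ∀ e : Finset (Fin (2*n)), e.card = 2 →
      (Finset.univ.filter (fun i => e ∈ M i)).card ≤ k)
    (hcond : (k : ℝ) ≤
      (1 / (Real.exp 1 * (2*x) * (2*(n:ℝ) - 1) * ((n-1).choose (x-1)))) *
        ((∑ j ∈ Finset.Icc (2*x - n) x,
            (((2*x).choose (2*j) : ℝ) * ((2*j).factorial : ℝ)) /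
              ((j.factorial : ℝ) * 2^j)) - Real.exp 1)) :
    ∃ M₀ : Finset (Finset (Fin (2*n))), IsPerfectMatching M₀ ∧
      ∀ i, (M₀ ∩ M i).card ≤ x - 1 := by
  have hPM i : M i ∈ perfectMatchingsOn univ :=
    isPerfectMatching_iff_mem_perfectMatchingsOn.1 (hM i)
  have hs : Fintype.card (Fin s) ≤ k * (2 * n - 1) :=
    card_le_mul_of_forall_card_filter_mem_le (Fintype.card_fin _) (by omega) M hPM hk
  obtain ⟨M₀, hM₀, hlt⟩ := exists_mem_perfectMatchingsOn_forall_card_inter_lt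
    (by rw [card_univ, Fintype.card_fin]) hxn M hPM
    ((Nat.mul_le_mul_right _ hs).trans_lt (mul_choose_lt_oddProd hx1 hxn hcond))
  exact ⟨M₀, isPerfectMatching_iff_mem_perfectMatchingsOn.2 hM₀,
    fun i => Nat.le_sub_one_of_lt (hlt i)⟩
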